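/- arXiv:1407.5446 — 5 statements merged into one kernel-verified Lean document; each statement's English description precedes it below -/
import Mathlib

section
/- If R is an fppf-local ring and 𝔭 ⊂ R is a prime ideal, then 𝔭ⁿ = 𝔭 for every integer n ≥ 1. -/
universe u

/-- A commutative ring is *fppf-local* if it is local and every faithfully flat
ring homomorphism of finite presentation out of it admits a retraction. -/
def FppfLocal (R : Type u) [CommRing R] : Prop :=
  IsLocalRing R ∧
    ∀ (B : Type u) [CommRing B] (f : R →+* B),
      f.FinitePresentation →
      (letI : Algebra R B := f.toAlgebra; Module.FaithfullyFlat R B) →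
      ∃ g : B →+* R, g.comp f = RingHom.id R

/-- A commutative ring is *absolutely integrally closed* (AIC) if every monic
polynomial over it has a root. -/
def IsAIC (R : Type*) [CommRing R] : Prop :=
  ∀ f : Polynomial R, f.Monic → ∃ x : R, f.IsRoot x

/-!
Adjoining a root of a monic polynomial of positive degree gives a free, hence faithfully flat,
finitely presented extension, so over an fppf-local ring every such polynomial has a root.
In particular every element is a square, and if `b ^ 2 ∈ p` then `b ∈ p`, so `p = p * p`.
-/

open Polynomial

namespace FppfLocal

variable {R : Type u} [CommRing R]

theorem exists_algHom (hR : FppfLocal R) (B : Type u) [CommRing B] [Algebra R B]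
    [Algebra.FinitePresentation R B] [Module.FaithfullyFlat R B] : Nonempty (B →ₐ[R] R) := by
  obtain ⟨g, hg⟩ := hR.2 B (algebraMap R B)
    (RingHom.finitePresentation_algebraMap.mpr ‹_›) (by rwa [toAlgebra_algebraMap])
  exact ⟨{ g with commutes' := RingHom.congr_fun hg }⟩

theorem exists_isRoot_of_monic (hR : FppfLocal R) {f : R[X]} (hf : f.Monic)
    (hdeg : 0 < f.natDegree) : ∃ x : R, f.IsRoot x := by
  have : IsLocalRing R := hR.1
  have : Module.Free R (AdjoinRoot f) := .of_basis (AdjoinRoot.powerBasis' hf).basis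
  have : Nontrivial (AdjoinRoot f) := Module.nontrivial_of_finrank_pos (R := R) <| by
    rwa [(AdjoinRoot.powerBasis' hf).finrank, AdjoinRoot.powerBasis'_dim]
  obtain ⟨g⟩ := hR.exists_algHom (AdjoinRoot f)
  refine ⟨g (AdjoinRoot.root f), ?_⟩
  rw [IsRoot.def, ← coe_aeval_eq_eval, aeval_algHom_apply, AdjoinRoot.aeval_eq,
    AdjoinRoot.mk_self, map_zero]

theorem exists_sq_eq (hR : FppfLocal R) (a : R) : ∃ b : R, b ^ 2 = a := by
  have : IsLocalRing R := hR.1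
  obtain ⟨b, hb⟩ := hR.exists_isRoot_of_monic (monic_X_pow_sub_C a two_ne_zero)
    (by rw [natDegree_X_pow_sub_C]; norm_num)
  exact ⟨b, by simpa [sub_eq_zero] using hb⟩

end FppfLocal

theorem Ideal.isIdempotentElem_of_forall_exists_sq_eq {R : Type*} [CommRing R]
    (hsq : ∀ a : R, ∃ b, b ^ 2 = a) (p : Ideal R) [p.IsPrime] : IsIdempotentElem p := by
  refine le_antisymm Ideal.mul_le_right fun a ha => ?_
  obtain ⟨b, rfl⟩ := hsq a
  have hb : b ∈ p := ‹p.IsPrime›.mem_of_pow_mem 2 ha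
  rw [sq]
  exact Ideal.mul_mem_mul hb hb

theorem fppfLocal_prime_pow_eq (R : Type u) [CommRing R] (hR : FppfLocal R)
    (p : Ideal R) [p.IsPrime] : ∀ n : ℕ, 1 ≤ n → p ^ n = p := fun _ hn =>
  (Ideal.isIdempotentElem_of_forall_exists_sq_eq hR.exists_sq_eq p).pow_eq (by omega)
end

section
/- A commutative ring is fppf-local and noetherian if and only if it is an algebraically closed field. -/
universe u

/-!
If `R` is fppf-local, every monic `p` of positive degree has a root in `R`: `R[X]/(p)` is free of
positive rank, hence faithfully flat and of finite presentation, and a retraction sends the class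
of `X` to a root. In particular every element is a square, so the maximal ideal is idempotent, and
for noetherian `R` it vanishes by Nakayama's lemma; the resulting field is then
algebraically closed. Conversely, over an algebraically closed field `K`, Zariski's lemma gives
every nonzero finitely generated `K`-algebra a `K`-point, which is a retraction.
-/

open Polynomial

lemma Polynomial.Monic.nontrivial_adjoinRoot {R : Type*} [CommRing R] [Nontrivial R] {p : R[X]}
    (hp : p.Monic) (hd : 0 < p.natDegree) : Nontrivial (AdjoinRoot p) :=
  Ideal.Quotient.nontrivial_iff.mpr <| by
    rw [Ne, Ideal.span_singleton_eq_top, hp.isUnit_iff]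
    exact hp.natDegree_pos.mp hd

lemma Polynomial.Monic.faithfullyFlat_adjoinRoot {R : Type*} [CommRing R] [Nontrivial R]
    {p : R[X]} (hp : p.Monic) (hd : 0 < p.natDegree) : Module.FaithfullyFlat R (AdjoinRoot p) :=
  have := hp.free_adjoinRoot
  have := hp.nontrivial_adjoinRoot hd
  inferInstance

lemma IsLocalRing.isField_of_forall_isSquare {R : Type*} [CommRing R] [IsLocalRing R]
    [IsNoetherianRing R] (h : ∀ a : R, IsSquare a) : IsField R := by
  have hm : IsIdempotentElem (maximalIdeal R) := by
    refine le_antisymm Ideal.mul_le_left fun a ha ↦ ?_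
    obtain ⟨b, rfl⟩ := h a
    have hb : b ∈ maximalIdeal R := ((maximalIdeal.isMaximal R).isPrime.mem_or_mem ha).elim id id
    exact Ideal.mul_mem_mul hb hb
  rw [isField_iff_maximalIdeal_eq]
  exact ((Ideal.isIdempotentElem_iff_eq_bot_or_top_of_isLocalRing _).mp hm).resolve_right
    (maximalIdeal.isMaximal R).ne_top

lemma IsAlgClosed.nonempty_algHom_of_finiteType {K B : Type*} [Field K] [IsAlgClosed K]
    [CommRing B] [Nontrivial B] [Algebra K B] [Algebra.FiniteType K B] :
    Nonempty (B →ₐ[K] K) := by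
  obtain ⟨m, hm⟩ := Ideal.exists_maximal B
  let := Ideal.Quotient.field m
  have : Module.Finite K (B ⧸ m) := finite_of_finite_type_of_isJacobsonRing K (B ⧸ m)
  exact ⟨(IsAlgClosed.lift : B ⧸ m →ₐ[K] K).comp (Ideal.Quotient.mkₐ K m)⟩

theorem fppfLocal_iff {R : Type u} [CommRing R] :
    FppfLocal R ↔ IsLocalRing R ∧ ∀ (B : Type u) [CommRing B] [Algebra R B]
      [Algebra.FinitePresentation R B] [Module.FaithfullyFlat R B], Nonempty (B →ₐ[R] R) := by
  refine and_congr_right fun _ ↦ ⟨fun h B _ _ _ _ ↦ ?_, fun h B _ f hfp hff ↦ ?_⟩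
  · have halg : (algebraMap R B).toAlgebra = ‹Algebra R B› := Algebra.algebra_ext _ _ fun _ ↦ rfl
    obtain ⟨g, hg⟩ := h B (algebraMap R B) (by rw [RingHom.FinitePresentation, halg]; assumption)
      (by rw [halg]; assumption)
    exact ⟨{ g with commutes' := RingHom.congr_fun hg }⟩
  · let := f.toAlgebra
    have : Algebra.FinitePresentation R B := hfp
    obtain ⟨φ⟩ := h B
    exact ⟨φ, φ.comp_algebraMap⟩

namespace FppfLocal

variable {R : Type u} [CommRing R]

lemma exists_isRoot (h : FppfLocal R) {p : R[X]} (hp : p.Monic) (hd : 0 < p.natDegree) :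
    ∃ x, p.IsRoot x := by
  have := h.1
  have := hp.faithfullyFlat_adjoinRoot hd
  obtain ⟨φ⟩ := (fppfLocal_iff.mp h).2 (AdjoinRoot p)
  refine ⟨φ (AdjoinRoot.root p), ?_⟩
  simpa only [IsRoot.def, aeval_def, Algebra.algebraMap_self, eval₂_id] using
    AdjoinRoot.aeval_algHom_eq_zero p φ

lemma isSquare (h : FppfLocal R) (a : R) : IsSquare a := by
  have := h.1
  obtain ⟨x, hx⟩ := h.exists_isRoot (monic_X_pow_sub_C a two_ne_zero)
    (by rw [natDegree_X_pow_sub_C]; norm_num)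
  exact ⟨x, by simpa [sub_eq_zero, sq, eq_comm] using hx⟩

lemma isAlgClosed {K : Type u} [Field K] (h : FppfLocal K) : IsAlgClosed K :=
  .of_exists_root K fun _ hp hirr ↦
    h.exists_isRoot hp (natDegree_pos_iff_degree_pos.mpr (degree_pos_of_irreducible hirr))

end FppfLocal

lemma IsAlgClosed.fppfLocal {K : Type u} [Field K] [IsAlgClosed K] : FppfLocal K := by
  refine fppfLocal_iff.mpr ⟨inferInstance, fun B _ _ _ _ ↦ ?_⟩
  have : Nontrivial B := (FaithfulSMul.algebraMap_injective K B).nontrivial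
  exact IsAlgClosed.nonempty_algHom_of_finiteType

theorem fppfLocal_noetherian_iff_algClosed_field (R : Type u) [CommRing R] :
    (FppfLocal R ∧ IsNoetherianRing R) ↔
      ∃ hf : IsField R, @IsAlgClosed R hf.toField := by
  constructor
  · rintro ⟨h, _⟩
    have := h.1
    have hf := IsLocalRing.isField_of_forall_isSquare h.isSquare
    let := hf.toField
    exact ⟨hf, h.isAlgClosed⟩
  · rintro ⟨hf, _⟩
    let := hf.toField
    exact ⟨IsAlgClosed.fppfLocal, inferInstance⟩
end

section
/- A local ring A is henselian if and only if A/𝔮 is henselian for every minimal prime ideal 𝔮 ⊂ A. -/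
/-!
For a minimal prime `q`, the henselian ring `A/q` provides `b_q` over the residual root `a₀` with
`f(b_q) ∈ q`. Call `c` good if `f` has a root modulo `(c)` over `a₀`. Roots modulo `J` and `K` glue
to a root modulo `J ⊓ K` (the difference of the two points is `(f(b₁) - f(b₂))` times a unit), and a
Newton step improves a root modulo `J` to one modulo `J²`; as `(J ⊓ K)² ≤ J K`, the good elements
form a submonoid. It meets every minimal prime, in `f(b_q)`, hence contains `0`: `f` has a root over
`a₀`. The converse holds because henselianity passes to quotients.
-/

open Polynomial IsLocalRing

universe u

theorem HenselianLocalRing.of_surjective {A B : Type u} [CommRing A] [CommRing B]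
    [HenselianLocalRing A] [IsLocalRing B] (π : A →+* B) (hπ : Function.Surjective π) :
    HenselianLocalRing B := by
  refine ((HenselianLocalRing.TFAE B).out 0 2).mpr ?_
  intro K _ φ hφ g hg b₀ h₁ h₂
  obtain ⟨f, rfl, -, hf⟩ :=
    lifts_and_natDegree_eq_and_monic ((mem_lifts g).mpr (map_surjective π hπ g)) hg
  rw [eval₂_map] at h₁
  rw [derivative_map, eval₂_map] at h₂
  have hA := ((HenselianLocalRing.TFAE A).out 0 2).mp ‹_›
  obtain ⟨a, ha, rfl⟩ := hA (φ.comp π) (hφ.comp hπ) f hf b₀ h₁ h₂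
  exact ⟨π a, ha.map, rfl⟩

theorem zero_mem_of_forall_minimalPrimes {R : Type*} [CommSemiring R] (S : Submonoid R)
    (h : ∀ q ∈ minimalPrimes R, ∃ s ∈ S, s ∈ q) : (0 : R) ∈ S := by
  by_contra h0
  obtain ⟨p, hp, -, hpS⟩ := Ideal.exists_le_prime_disjoint ⊥ S
    (Set.disjoint_left.mpr fun x hx hxS => h0 (Ideal.mem_bot.mp hx ▸ hxS))
  obtain ⟨q, hq, hqp⟩ := Ideal.exists_minimalPrimes_le (bot_le : ⊥ ≤ p)
  obtain ⟨s, hsS, hsq⟩ := h q hq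
  exact Set.disjoint_left.mp hpS (hqp hsq) hsS

theorem Polynomial.eval_mem_of_sub_mem {R : Type*} [CommRing R] {I : Ideal R} {f : R[X]}
    {a b : R} (hab : a - b ∈ I) (hb : f.eval b ∈ I) : f.eval a ∈ I := by
  simpa using I.add_mem (I.mem_of_dvd (sub_dvd_eval_sub a b f) hab) hb

namespace IsLocalRing

variable {A : Type u} [CommRing A] [IsLocalRing A]

theorem isUnit_of_sub_mem_maximalIdeal {x y : A} (hxy : x - y ∈ maximalIdeal A)
    (hy : IsUnit y) : IsUnit x := by
  by_contra hx
  have := (maximalIdeal A).sub_mem hx hxy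
  rw [sub_sub_cancel] at this
  exact this hy

theorem isUnit_eval_of_sub_mem_maximalIdeal {f : A[X]} {a b : A}
    (hab : b - a ∈ maximalIdeal A) (ha : IsUnit (f.eval a)) : IsUnit (f.eval b) :=
  isUnit_of_sub_mem_maximalIdeal ((maximalIdeal A).mem_of_dvd (sub_dvd_eval_sub b a f) hab) ha

def HasRootMod (f : A[X]) (a₀ : A) (J : Ideal A) : Prop :=
  ∃ b, b - a₀ ∈ maximalIdeal A ∧ f.eval b ∈ J

variable {f : A[X]} {a₀ : A} {J K : Ideal A}

theorem hasRootMod_top : HasRootMod f a₀ ⊤ :=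
  ⟨a₀, by simp, trivial⟩

theorem HasRootMod.mono (h : HasRootMod f a₀ J) (hJK : J ≤ K) : HasRootMod f a₀ K :=
  let ⟨b, hb, hfb⟩ := h
  ⟨b, hb, hJK hfb⟩

theorem HasRootMod.sq (ha₀ : f.eval a₀ ∈ maximalIdeal A) (hu : IsUnit (f.derivative.eval a₀))
    (h : HasRootMod f a₀ J) : HasRootMod f a₀ (J ^ 2) := by
  obtain ⟨b, hb, hfb⟩ := h
  obtain ⟨u, hu⟩ := (isUnit_eval_of_sub_mem_maximalIdeal hb hu).exists_right_inv
  obtain ⟨k, hk⟩ := f.binomExpansion b (-(f.eval b * u))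
  refine ⟨b + -(f.eval b * u), ?_, ?_⟩
  · rw [add_sub_right_comm]
    exact (maximalIdeal A).add_mem hb
      ((maximalIdeal A).neg_mem ((maximalIdeal A).mul_mem_right _ (eval_mem_of_sub_mem hb ha₀)))
  · have hNewton : f.eval (b + -(f.eval b * u)) = k * u ^ 2 * f.eval b ^ 2 := by
      linear_combination hk - f.eval b * hu
    rw [hNewton]
    exact (J ^ 2).mul_mem_left _ (Ideal.pow_mem_pow hfb 2)

theorem HasRootMod.inf (hu : IsUnit (f.derivative.eval a₀)) (hJ : HasRootMod f a₀ J)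
    (hK : HasRootMod f a₀ K) : HasRootMod f a₀ (J ⊓ K) := by
  rcases eq_or_ne J ⊤ with rfl | hJtop
  · simpa using hK
  obtain ⟨b₁, hb₁, hfb₁⟩ := hJ
  obtain ⟨b₂, hb₂, hfb₂⟩ := hK
  have hb₁₂ : b₁ - b₂ ∈ maximalIdeal A := by
    simpa using (maximalIdeal A).sub_mem hb₁ hb₂
  obtain ⟨k, hk⟩ := f.binomExpansion b₂ (b₁ - b₂)
  rw [add_sub_cancel] at hk
  have hw : IsUnit (f.derivative.eval b₂ + k * (b₁ - b₂)) :=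
    isUnit_of_sub_mem_maximalIdeal (by simpa using (maximalIdeal A).mul_mem_left k hb₁₂)
      (isUnit_eval_of_sub_mem_maximalIdeal hb₂ hu)
  have hdvd : f.eval b₁ - f.eval b₂ ∣ b₁ - b₂ := by
    rw [hk, show f.eval b₂ + f.derivative.eval b₂ * (b₁ - b₂) + k * (b₁ - b₂) ^ 2 - f.eval b₂ =
      (b₁ - b₂) * (f.derivative.eval b₂ + k * (b₁ - b₂)) by ring]
    exact hw.mul_right_dvd.mpr dvd_rfl
  obtain ⟨x₁, hx₁, x₂, hx₂, hx⟩ := Submodule.mem_sup.mp <|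
    (J ⊔ K).mem_of_dvd hdvd ((J ⊔ K).sub_mem (Ideal.mem_sup_left hfb₁) (Ideal.mem_sup_right hfb₂))
  refine ⟨b₁ - x₁, ?_, ?_, ?_⟩
  · rw [sub_right_comm]
    exact (maximalIdeal A).sub_mem hb₁ (le_maximalIdeal hJtop hx₁)
  · exact eval_mem_of_sub_mem (by simpa using J.neg_mem hx₁) hfb₁
  · exact eval_mem_of_sub_mem (by rwa [show b₁ - x₁ - b₂ = x₂ by linear_combination -hx]) hfb₂

theorem HasRootMod.mul (ha₀ : f.eval a₀ ∈ maximalIdeal A) (hu : IsUnit (f.derivative.eval a₀))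
    (hJ : HasRootMod f a₀ J) (hK : HasRootMod f a₀ K) : HasRootMod f a₀ (J * K) :=
  ((hJ.inf hu hK).sq ha₀ hu).mono (by rw [pow_two]; exact Ideal.mul_mono inf_le_left inf_le_right)

def rootSubmonoid (ha₀ : f.eval a₀ ∈ maximalIdeal A) (hu : IsUnit (f.derivative.eval a₀)) :
    Submonoid A where
  carrier := {c | HasRootMod f a₀ (Ideal.span {c})}
  one_mem' := by simpa using hasRootMod_top
  mul_mem' hc hd := by
    rw [Set.mem_ofPred_eq, ← Ideal.span_singleton_mul_span_singleton]
    exact hc.mul ha₀ hu hd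

theorem hasRootMod_of_henselianLocalRing_quotient (I : Ideal A) [HenselianLocalRing (A ⧸ I)]
    (hf : f.Monic) (ha₀ : f.eval a₀ ∈ maximalIdeal A) (hu : IsUnit (f.derivative.eval a₀)) :
    HasRootMod f a₀ I := by
  have hI : I ≤ maximalIdeal A := le_maximalIdeal (Ideal.Quotient.nontrivial_iff.mp inferInstance)
  let φ : A ⧸ I →+* ResidueField A := Ideal.Quotient.factor hI
  have hφ : φ.comp (Ideal.Quotient.mk I) = residue A := Ideal.Quotient.factor_comp_mk hI
  have hAI := ((HenselianLocalRing.TFAE (A ⧸ I)).out 0 2).mp ‹_›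
  obtain ⟨a, ha, hφa⟩ := hAI φ (Ideal.Quotient.factor_surjective hI) (f.map (Ideal.Quotient.mk I))
    (hf.map _) (residue A a₀)
    (by rwa [eval₂_map, hφ, eval₂_at_apply, residue_eq_zero_iff])
    (by rwa [derivative_map, eval₂_map, hφ, eval₂_at_apply, residue_ne_zero_iff_isUnit])
  obtain ⟨b, rfl⟩ := Ideal.Quotient.mk_surjective a
  refine ⟨b, Ideal.Quotient.eq.mp hφa, ?_⟩
  rw [← Ideal.Quotient.eq_zero_iff_mem, ← eval_map_apply]
  exact ha

end IsLocalRing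

theorem henselian_iff_quotients_minimalPrimes_henselian
    (A : Type*) [CommRing A] [IsLocalRing A] :
    HenselianLocalRing A ↔
      ∀ q ∈ minimalPrimes A, HenselianLocalRing (A ⧸ q) := by
  refine ⟨fun _ q hq => ?_, fun H => ⟨fun f hf a₀ ha₀ hu => ?_⟩⟩
  · have : q.IsPrime := hq.1.1
    have : IsLocalRing (A ⧸ q) := .of_surjective' _ Ideal.Quotient.mk_surjective
    exact .of_surjective (Ideal.Quotient.mk q) Ideal.Quotient.mk_surjective
  · have h0 := zero_mem_of_forall_minimalPrimes (rootSubmonoid ha₀ hu) fun q hq => by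
      have : HenselianLocalRing (A ⧸ q) := H q hq
      obtain ⟨b, hb, hfb⟩ := hasRootMod_of_henselianLocalRing_quotient q hf ha₀ hu
      exact ⟨f.eval b, ⟨b, hb, Ideal.mem_span_singleton_self _⟩, hfb⟩
    obtain ⟨b, hb, hfb⟩ := h0
    rw [Ideal.span_singleton_eq_bot.mpr rfl, Ideal.mem_bot] at hfb
    exact ⟨b, hfb, hb⟩
end

section
/- Let R be a local domain that is absolutely integrally closed. Then R is a henselian local ring. -/
/-!
Over an absolutely integrally closed ring every monic polynomial is a product of linear factors
`X - r`. If `f(a₀)` lies in the maximal ideal, then so does one of the factors `a₀ - r`, since the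
maximal ideal is prime, and that `r` is a root of `f` congruent to `a₀`.
-/

open Polynomial

theorem IsAIC.exists_eq_multiset_prod_X_sub_C {R : Type*} [CommRing R] (hR : IsAIC R)
    {f : R[X]} (hf : f.Monic) : ∃ s : Multiset R, f = (s.map fun r => X - C r).prod := by
  nontriviality R
  induction h : f.natDegree generalizing f with
  | zero => exact ⟨0, by simpa using eq_one_of_monic_natDegree_zero hf h⟩
  | succ n ih =>
    obtain ⟨x, hx⟩ := hR f hf
    set g := f /ₘ (X - C x)
    have hfg : (X - C x) * g = f := mul_divByMonic_eq_iff_isRoot.2 hx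
    have hg : g.Monic := (monic_X_sub_C x).of_mul_monic_left (hfg ▸ hf)
    have hdeg : g.natDegree = n := by
      rw [← hfg, (monic_X_sub_C x).natDegree_mul hg, natDegree_X_sub_C] at h
      omega
    obtain ⟨s, hs⟩ := ih hg hdeg
    exact ⟨x ::ₘ s, by rw [← hfg, hs, Multiset.map_cons, Multiset.prod_cons]⟩

theorem Ideal.IsPrime.exists_isRoot_sub_mem_of_eq_multiset_prod_X_sub_C {R : Type*} [CommRing R]
    {P : Ideal R} (hP : P.IsPrime) {f : R[X]} {s : Multiset R}
    (hf : f = (s.map fun r => X - C r).prod) {a : R} (ha : f.eval a ∈ P) :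
    ∃ r, f.IsRoot r ∧ r - a ∈ P := by
  rw [hf, eval_multiset_prod, Multiset.map_map] at ha
  obtain ⟨_, hy, hyP⟩ := (hP.multiset_prod_mem_iff_exists_mem _).1 ha
  obtain ⟨r, hr, rfl⟩ := Multiset.mem_map.1 hy
  refine ⟨r, ?_, by simpa using P.neg_mem hyP⟩
  rw [hf]
  exact dvd_iff_isRoot.1 (Multiset.dvd_prod (Multiset.mem_map_of_mem (fun r => X - C r) hr))

theorem aic_local_domain_henselian_general (R : Type*) [CommRing R]
    [IsLocalRing R] (hR : IsAIC R) : HenselianLocalRing R := by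
  refine ⟨fun f hf a₀ ha₀ _ => ?_⟩
  obtain ⟨s, hs⟩ := hR.exists_eq_multiset_prod_X_sub_C hf
  exact (IsLocalRing.maximalIdeal.isMaximal R).isPrime
    |>.exists_isRoot_sub_mem_of_eq_multiset_prod_X_sub_C hs ha₀

theorem aic_local_domain_henselian (R : Type*) [CommRing R] [IsDomain R]
    [IsLocalRing R] (hR : IsAIC R) : HenselianLocalRing R :=
  aic_local_domain_henselian_general R hR
end

section
/- Let R be a henselian local ring with separably closed residue field k, and let A, B be finite flat local R-algebras with local structure maps. Then the tensor product A ⊗_R B is a local ring. -/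
/-!
Let `C = A ⊗[R] B`, `J` its Jacobson radical and `q` the exponential characteristic of `k`.
As `C` is integral over `R`, every maximal ideal of `C` pulls back to the maximal ideals of
`R`, `A` and `B`; so `𝔪_A ⊗ 1` and `1 ⊗ 𝔪_B` lie in `J`, and `C ⧸ J` is a `k`-algebra of
exponential characteristic `q`. The residue field of `A` is algebraic over the separably closed
field `k`, hence purely inseparable: every `a : A` has `a ^ q ^ n ≡ r` modulo `𝔪_A` for some
`r : R`. Since Frobenius is additive modulo `J`, every `x : C` then has `x ^ q ^ n ≡ 1 ⊗ b`
modulo `J`. If `x` is not a unit, neither is `b`, so `x ^ q ^ n ∈ J` and `x ∈ J`: the nonunits of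
`C` form the ideal `J`.
-/

open TensorProduct IsLocalRing

theorem IsLocalRing.map_maximalIdeal_le_jacobson_bot {R S T : Type*} [CommRing R] [CommRing S]
    [CommRing T] [IsLocalRing S] [Algebra R S] [Algebra R T] [Algebra.IsIntegral R S]
    [Algebra.IsIntegral R T] (f : S →ₐ[R] T) :
    (maximalIdeal S).map f ≤ Ideal.jacobson ⊥ := by
  refine Ideal.map_le_iff_le_comap.mpr fun x hx => Ideal.mem_sInf.mpr ?_
  rintro P ⟨-, hP⟩
  have hPS : (P.comap f).IsMaximal := by
    refine Ideal.isMaximal_of_isIntegral_of_isMaximal_comap (R := R) _ ?_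
    convert Ideal.isMaximal_comap_of_isIntegral_of_isMaximal (R := R) P using 1
    ext
    simp
  exact (eq_maximalIdeal hPS).ge hx

theorem IsLocalRing.exists_pow_ringExpChar_pow_sub_algebraMap_mem_maximalIdeal
    {R S : Type*} [CommRing R] [CommRing S] [IsLocalRing R] [IsSepClosed (ResidueField R)]
    [IsLocalRing S] [Algebra R S] [Algebra.IsIntegral R S] [IsLocalHom (algebraMap R S)] (x : S) :
    ∃ (n : ℕ) (r : R),
      x ^ ringExpChar (ResidueField R) ^ n - algebraMap R S r ∈ maximalIdeal S := by
  have : Algebra.IsIntegral (ResidueField R) (ResidueField S) :=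
    Ideal.Quotient.algebra_isIntegral_of_liesOver _ _
  obtain ⟨n, y, hy⟩ := IsPurelyInseparable.pow_mem (ResidueField R)
    (ringExpChar (ResidueField R)) (residue S x)
  obtain ⟨r, rfl⟩ := residue_surjective y
  refine ⟨n, r, (residue_eq_zero_iff _).mp ?_⟩
  rw [map_sub, map_pow, ← hy]
  exact sub_self _

theorem IsLocalRing.of_pow_sub_mem_jacobson_bot {S T : Type*} [CommRing S] [CommRing T]
    [IsLocalRing S] [Nontrivial T] (g : S →+* T)
    (hg : (maximalIdeal S).map g ≤ Ideal.jacobson ⊥)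
    (h : ∀ x : T, ∃ n ≠ 0, ∃ s : S, x ^ n - g s ∈ Ideal.jacobson ⊥) : IsLocalRing T := by
  have isUnit_add {u j : T} (hu : IsUnit u) (hj : j ∈ Ideal.jacobson ⊥) : IsUnit (u + j) := by
    obtain ⟨u, rfl⟩ := hu
    have h : (u : T) * (j * ↑u⁻¹ + 1) = u + j := by
      rw [mul_add, mul_one, mul_comm j, ← mul_assoc, Units.mul_inv, one_mul, add_comm]
    exact h ▸ u.isUnit.mul (Ideal.mem_jacobson_bot.mp hj ↑u⁻¹)
  refine of_isUnit_or_isUnit_one_sub_self fun x => or_iff_not_imp_left.mpr fun hx => ?_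
  obtain ⟨n, hn, s, hs⟩ := h x
  have hs_mem : s ∈ maximalIdeal S := fun hsu =>
    hx <| (isUnit_pow_iff hn).mp <| by simpa using isUnit_add (hsu.map g) hs
  have hxn : x ^ n ∈ Ideal.jacobson ⊥ := by
    simpa using Ideal.add_mem _ hs (hg (Ideal.mem_map_of_mem g hs_mem))
  have hxJ : x ∈ Ideal.jacobson ⊥ := Ideal.isRadical_jacobson _ ⟨n, hxn⟩
  have hunit := Ideal.mem_jacobson_bot.mp hxJ (-1)
  rwa [mul_neg_one, neg_add_eq_sub] at hunit

theorem Ideal.add_pow_expChar_pow_sub_mem {T : Type*} [CommRing T] (I : Ideal T) (q : ℕ)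
    [ExpChar (T ⧸ I) q] {x y u v : T} {m n : ℕ} (hx : x ^ q ^ m - u ∈ I)
    (hy : y ^ q ^ n - v ∈ I) : (x + y) ^ q ^ (m + n) - (u ^ q ^ n + v ^ q ^ m) ∈ I := by
  rw [← Ideal.Quotient.eq] at hx hy ⊢
  simp only [map_add, map_pow] at hx hy ⊢
  rw [add_pow_expChar_pow, ← hx, ← hy, ← pow_mul, ← pow_mul, ← pow_add, ← pow_add, add_comm n]

theorem IsLocalRing.expChar_quotient_of_map_maximalIdeal_le {R T : Type*} [CommRing R]
    [IsLocalRing R] [CommRing T] [Algebra R T] {I : Ideal T} (hI : I ≠ ⊤)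
    (h : (maximalIdeal R).map (algebraMap R T) ≤ I) :
    ExpChar (T ⧸ I) (ringExpChar (ResidueField R)) :=
  have : Nontrivial (T ⧸ I) := Ideal.Quotient.nontrivial_iff.mpr hI
  let f : ResidueField R →+* T ⧸ I := Ideal.Quotient.lift _
    ((Ideal.Quotient.mk I).comp (algebraMap R T))
    fun _ hr => Ideal.Quotient.eq_zero_iff_mem.mpr (h (Ideal.mem_map_of_mem _ hr))
  expChar_of_injective_ringHom f.injective _

theorem Algebra.TensorProduct.exists_pow_sub_one_tmul_mem_jacobson_bot (R A B : Type*)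
    [CommRing R] [IsLocalRing R] [IsSepClosed (ResidueField R)] [CommRing A] [CommRing B]
    [Algebra R A] [Algebra R B] [IsLocalRing A] [Algebra.IsIntegral R A] [Algebra.IsIntegral R B]
    [IsLocalHom (algebraMap R A)] [Nontrivial (A ⊗[R] B)] (x : A ⊗[R] B) :
    ∃ (n : ℕ) (b : B),
      x ^ ringExpChar (ResidueField R) ^ n - (1 : A) ⊗ₜ b ∈ Ideal.jacobson ⊥ := by
  set q := ringExpChar (ResidueField R)
  set J := Ideal.jacobson (⊥ : Ideal (A ⊗[R] B))
  have : Algebra.IsIntegral R (A ⊗[R] B) := Algebra.IsIntegral.trans A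
  have : ExpChar ((A ⊗[R] B) ⧸ J) q :=
    expChar_quotient_of_map_maximalIdeal_le (Ideal.jacobson_eq_top_iff.not.mpr bot_ne_top)
      (map_maximalIdeal_le_jacobson_bot (Algebra.ofId R _))
  induction x using TensorProduct.induction_on with
  | zero => exact ⟨0, 0, by simp⟩
  | tmul a b =>
    obtain ⟨n, r, ha⟩ := exists_pow_ringExpChar_pow_sub_algebraMap_mem_maximalIdeal (R := R) a
    refine ⟨n, r • b ^ q ^ n, ?_⟩
    have hfactor : (a ⊗ₜ[R] b) ^ q ^ n - (1 : A) ⊗ₜ (r • b ^ q ^ n) =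
        (includeLeft : A →ₐ[R] A ⊗[R] B) (a ^ q ^ n - algebraMap R A r) *
          (1 : A) ⊗ₜ[R] (b ^ q ^ n) := by
      rw [tmul_pow, includeLeft_apply, tmul_mul_tmul, mul_one, one_mul, sub_tmul,
        Algebra.algebraMap_eq_smul_one, smul_tmul]
    rw [hfactor]
    exact J.mul_mem_right _
      (map_maximalIdeal_le_jacobson_bot _ (Ideal.mem_map_of_mem _ ha))
  | add x y hx hy =>
    obtain ⟨m, u, hx⟩ := hx
    obtain ⟨n, v, hy⟩ := hy
    refine ⟨m + n, u ^ q ^ n + v ^ q ^ m, ?_⟩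
    simpa [tmul_add, tmul_pow] using J.add_pow_expChar_pow_sub_mem q hx hy

theorem tensorProduct_of_finite_flat_local_isLocalRing_general
    (R : Type*) [CommRing R] [HenselianLocalRing R]
    [IsSepClosed (IsLocalRing.ResidueField R)]
    (A B : Type*) [CommRing A] [CommRing B] [Algebra R A] [Algebra R B]
    [Module.Finite R A] [Module.Finite R B] [Module.Flat R B]
    [IsLocalRing A] [IsLocalRing B]
    (hA : IsLocalHom (algebraMap R A)) (hB : IsLocalHom (algebraMap R B)) :
    IsLocalRing (A ⊗[R] B) := by
  have : Module.FaithfullyFlat R B := .of_flat_of_isLocalHom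
  have : ExpChar (ResidueField R) (ringExpChar (ResidueField R)) := ringExpChar.expChar _
  refine of_pow_sub_mem_jacobson_bot Algebra.TensorProduct.includeRight.toRingHom
    (map_maximalIdeal_le_jacobson_bot _) fun x => ?_
  obtain ⟨n, b, hb⟩ := Algebra.TensorProduct.exists_pow_sub_one_tmul_mem_jacobson_bot R A B x
  exact ⟨_, pow_ne_zero n (expChar_pos (ResidueField R) _).ne', b, hb⟩

theorem tensorProduct_of_finite_flat_local_isLocalRing
    (R : Type*) [CommRing R] [HenselianLocalRing R]
    [IsSepClosed (IsLocalRing.ResidueField R)]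
    (A B : Type*) [CommRing A] [CommRing B] [Algebra R A] [Algebra R B]
    [Module.Finite R A] [Module.Flat R A] [Module.Finite R B] [Module.Flat R B]
    [IsLocalRing A] [IsLocalRing B]
    (hA : IsLocalHom (algebraMap R A)) (hB : IsLocalHom (algebraMap R B)) :
    IsLocalRing (A ⊗[R] B) :=
  tensorProduct_of_finite_flat_local_isLocalRing_general R A B hA hB
end
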